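/- (Stability of the signal arrival time.) Let 0 < c₀ < c, 0 < d₁ ≤ d₀, and T ≥ d₀/c, let x, ν ∈ ℝ³, and let f : ℝ → ℝ³ be continuous with η := inf_{t∈[0,T]} ‖f t ×₃ ν‖_∞ > 0. Let a, ã : ℝ → ℝ³ be differentiable with ‖deriv a t‖ ≤ c₀, ‖deriv ã t‖ ≤ c₀, d₁ ≤ ‖x - a t‖ ≤ d₀ and d₁ ≤ ‖x - ã t‖ ≤ d₀ for all t, and let Hν and H̃ν be the tangential fields of the orbits a and ã respectively. Then, with arrival times T(x) := ‖x - a 0‖/c and T̃(x) := ‖x - ã 0‖/c, one has |T(x) − T̃(x)| ≤ C₀ · sup_{s∈[0,T]} ‖Hν s − H̃ν s‖_∞, where C₀ := 12π·d₀·(c + c₀)·T / (c·η). -/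

import Mathlib

noncomputable section

abbrev E3 := EuclideanSpace ℝ (Fin 3)

/-- The cross product on `ℝ³`. -/
def cross3 (u v : E3) : E3 :=
  WithLp.toLp 2 ![u 1 * v 2 - u 2 * v 1, u 2 * v 0 - u 0 * v 2, u 0 * v 1 - u 1 * v 0]

/-- The maximum norm `‖y‖_∞ = maximum over i of |y i|` on `ℝ³`. -/
def ninf (y : E3) : ℝ := ⨆ i : Fin 3, |y i|

/-- `Hν` is the tangential field of the orbit `a` (relative to the observation point `x`,
the source profile `f` and the vector `ν`, with wave speed `c`). -/
def tangentialField (c : ℝ) (x : E3) (a f : ℝ → E3) (ν : E3) (Hν : ℝ → E3) : Prop :=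
  (∀ s : ℝ, s < ‖x - a 0‖ / c → Hν s = 0) ∧
  (∀ t : ℝ, 0 ≤ t →
    Hν (t + ‖x - a t‖ / c) =
      (c / (4 * Real.pi * ‖x - a t‖ * (c + deriv (fun r : ℝ => ‖x - a r‖) t))) •
        cross3 (f t) ν)

/-!
Assume the signal from `a` arrives first, at `τ = ‖x - a 0‖ / c ≤ τ' = ‖x - a' 0‖ / c`. If
`τ < τ'`, then at time `τ` the field `Hν'` still vanishes while `Hν` has just jumped to
`fieldAmplitude c x a 0 • (f 0 ×₃ ν)`, whose sup norm is at least `c η / (4π d₀ (c + c₀))`;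
so `C₀ · sup ≥ 3T`, while `|τ - τ'| ≤ T` because both arrival times lie in `[0, d₀ / c]`.

Since `sSup` of an unbounded set of reals is `0`, we also need the fields to be bounded on
`[0, T]`: every `s ≥ τ` is the arrival time `t + ‖x - a t‖ / c` of a signal emitted at some
`t ∈ [0, s]` (intermediate value theorem), and there the amplitude is at most
`c / (4π d₁ (c - c₀))`.
-/

open Set Filter

lemma ninf_eq_norm_ofLp (y : E3) : ninf y = ‖WithLp.ofLp y‖ := by
  rw [← PiLp.norm_toLp (WithLp.ofLp y), PiLp.norm_eq_ciSup]
  rfl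

lemma ninf_nonneg (y : E3) : 0 ≤ ninf y :=
  (ninf_eq_norm_ofLp y).symm ▸ norm_nonneg _

lemma ninf_sub_comm (u w : E3) : ninf (u - w) = ninf (w - u) := by
  simp only [ninf_eq_norm_ofLp, WithLp.ofLp_sub, norm_sub_rev]

lemma ninf_sub_le (u w : E3) : ninf (u - w) ≤ ninf u + ninf w := by
  simp only [ninf_eq_norm_ofLp, WithLp.ofLp_sub]
  exact norm_sub_le _ _

lemma ninf_smul (r : ℝ) (y : E3) : ninf (r • y) = |r| * ninf y := by
  simp only [ninf_eq_norm_ofLp, WithLp.ofLp_smul, norm_smul, Real.norm_eq_abs]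

lemma continuous_ninf : Continuous ninf := by
  simp only [funext ninf_eq_norm_ofLp]
  exact continuous_norm.comp (PiLp.continuous_ofLp 2 _)

lemma continuous_cross3_left (ν : E3) : Continuous fun u => cross3 u ν := by
  refine (PiLp.continuous_toLp 2 _).comp (continuous_pi fun i => ?_)
  fin_cases i <;>
    simp only [Fin.zero_eta, Fin.mk_one, Fin.reduceFinMk, Matrix.cons_val_zero,
      Matrix.cons_val_one, Matrix.cons_val] <;> fun_prop

-- No `f t ≠ 0` needed: slopes of `‖f‖` are dominated by those of `f`, and `deriv` is `0`
-- where `‖f‖` is not differentiable.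
theorem abs_deriv_norm_le {E : Type*} [NormedAddCommGroup E] [NormedSpace ℝ E] {f : ℝ → E}
    {t : ℝ} (hf : DifferentiableAt ℝ f t) : |deriv (fun r => ‖f r‖) t| ≤ ‖deriv f t‖ := by
  by_cases hg : DifferentiableAt ℝ (fun r => ‖f r‖) t
  · refine le_of_tendsto_of_tendsto (hasDerivAt_iff_tendsto_slope.1 hg.hasDerivAt).abs
      (hasDerivAt_iff_tendsto_slope.1 hf.hasDerivAt).norm (Eventually.of_forall fun s => ?_)
    dsimp only
    rw [slope_def_field, slope_def_module, abs_div, norm_smul, norm_inv, Real.norm_eq_abs,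
      div_eq_inv_mul]
    exact mul_le_mul_of_nonneg_left (abs_norm_sub_norm_le _ _) (by positivity)
  · rw [deriv_zero_of_not_differentiableAt hg, abs_zero]
    exact norm_nonneg _

section Amplitude

variable {E : Type*} [NormedAddCommGroup E] [NormedSpace ℝ E] {c c₀ : ℝ} {x : E} {a : ℝ → E}
  {t : ℝ}

def fieldAmplitude (c : ℝ) (x : E) (a : ℝ → E) (t : ℝ) : ℝ :=
  c / (4 * Real.pi * ‖x - a t‖ * (c + deriv (fun r => ‖x - a r‖) t))

lemma abs_deriv_dist_le (ha : DifferentiableAt ℝ a t) :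
    |deriv (fun r => ‖x - a r‖) t| ≤ ‖deriv a t‖ := by
  simpa [deriv_const_sub] using abs_deriv_norm_le (ha.const_sub x)

lemma fieldAmplitude_le {d₁ : ℝ} (hc₀c : c₀ < c) (hd₁ : 0 < d₁) (hdist : d₁ ≤ ‖x - a t‖)
    (ha : DifferentiableAt ℝ a t) (hspeed : ‖deriv a t‖ ≤ c₀) :
    |fieldAmplitude c x a t| ≤ c / (4 * Real.pi * d₁ * (c - c₀)) := by
  have hc₀ : 0 ≤ c₀ := (norm_nonneg _).trans hspeed
  have hv' := abs_le.1 ((abs_deriv_dist_le (x := x) ha).trans hspeed)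
  have hcc₀ : 0 < c - c₀ := by linarith
  have hcv : c - c₀ ≤ c + deriv (fun r => ‖x - a r‖) t := by linarith
  have hcv₀ : 0 < c + deriv (fun r => ‖x - a r‖) t := by linarith
  have hc : 0 ≤ c := by linarith
  rw [fieldAmplitude, abs_of_nonneg (div_nonneg hc (by positivity))]
  gcongr

lemma le_fieldAmplitude {d₀ : ℝ} (hc₀c : c₀ < c) (hpos : 0 < ‖x - a t‖) (hdist : ‖x - a t‖ ≤ d₀)
    (ha : DifferentiableAt ℝ a t) (hspeed : ‖deriv a t‖ ≤ c₀) :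
    c / (4 * Real.pi * d₀ * (c + c₀)) ≤ fieldAmplitude c x a t := by
  have hv' := abs_le.1 ((abs_deriv_dist_le (x := x) ha).trans hspeed)
  have hcv : 0 < c + deriv (fun r => ‖x - a r‖) t := by linarith
  have hd₀ : 0 < d₀ := hpos.trans_le hdist
  have hc : 0 ≤ c := by linarith
  unfold fieldAmplitude
  gcongr
  exact hv'.2

end Amplitude

theorem exists_emission_time {E : Type*} [NormedAddCommGroup E] {c : ℝ} (hc : 0 ≤ c) {x : E}
    {a : ℝ → E} (ha : Continuous a) {s : ℝ} (hs : ‖x - a 0‖ / c ≤ s) :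
    ∃ t ∈ Icc 0 s, t + ‖x - a t‖ / c = s := by
  have hs₀ : 0 ≤ s := (div_nonneg (norm_nonneg _) hc).trans hs
  refine intermediate_value_Icc hs₀ (by fun_prop) ⟨by simpa using hs, ?_⟩
  simp only [le_add_iff_nonneg_right]
  positivity

namespace tangentialField

variable {c c₀ d₁ : ℝ} {x ν : E3} {a f H : ℝ → E3}

lemma apply_arrival (hH : tangentialField c x a f ν H) :
    H (‖x - a 0‖ / c) = fieldAmplitude c x a 0 • cross3 (f 0) ν := by
  have := hH.2 0 le_rfl
  rwa [zero_add] at this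

lemma bddAbove_ninf (hH : tangentialField c x a f ν H) (hc₀c : c₀ < c) (hd₁ : 0 < d₁)
    (hf : Continuous f) (ha : Differentiable ℝ a) (hspeed : ∀ t, ‖deriv a t‖ ≤ c₀)
    (hdist : ∀ t, d₁ ≤ ‖x - a t‖) (T : ℝ) :
    BddAbove ((fun s => ninf (H s)) '' Icc 0 T) := by
  have hcc₀ : 0 < c - c₀ := sub_pos.2 hc₀c
  have hc : 0 ≤ c := ((norm_nonneg _).trans (hspeed 0)).trans hc₀c.le
  obtain ⟨B, hB⟩ := (isCompact_Icc (a := 0) (b := T)).bddAbove_image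
    (continuous_ninf.comp ((continuous_cross3_left ν).comp hf)).continuousOn
  refine ⟨max (c / (4 * Real.pi * d₁ * (c - c₀)) * B) 0, ?_⟩
  rintro _ ⟨s, hs, rfl⟩
  rcases lt_or_ge s (‖x - a 0‖ / c) with hbefore | hafter
  · simp [hH.1 s hbefore, ninf_eq_norm_ofLp]
  obtain ⟨t, ht, rfl⟩ := exists_emission_time hc ha.continuous hafter
  dsimp only
  rw [hH.2 t ht.1, ninf_smul]
  refine le_max_of_le_left (mul_le_mul (fieldAmplitude_le hc₀c hd₁ (hdist t) (ha t) (hspeed t))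
    (hB ⟨t, ⟨ht.1, ht.2.trans hs.2⟩, rfl⟩) (ninf_nonneg _) (by positivity))

end tangentialField

lemma bddAbove_ninf_sub {s : Set ℝ} {H H' : ℝ → E3} (h : BddAbove ((fun t => ninf (H t)) '' s))
    (h' : BddAbove ((fun t => ninf (H' t)) '' s)) :
    BddAbove ((fun t => ninf (H t - H' t)) '' s) := by
  obtain ⟨M, hM⟩ := h
  obtain ⟨M', hM'⟩ := h'
  refine ⟨M + M', ?_⟩
  rintro _ ⟨t, ht, rfl⟩
  exact (ninf_sub_le _ _).trans (add_le_add (hM ⟨t, ht, rfl⟩) (hM' ⟨t, ht, rfl⟩))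

theorem tangentialField.le_ninf_sub_at_arrival {c c₀ d₀ η : ℝ} {x ν : E3} {a a' f H H' : ℝ → E3}
    (hH : tangentialField c x a f ν H) (hH' : tangentialField c x a' f ν H')
    (hc₀c : c₀ < c) (ha : DifferentiableAt ℝ a 0) (hspeed : ‖deriv a 0‖ ≤ c₀)
    (hpos : 0 < ‖x - a 0‖) (hdist : ‖x - a 0‖ ≤ d₀) (hlt : ‖x - a 0‖ < ‖x - a' 0‖)
    (hη₀ : 0 ≤ η) (hη : η ≤ ninf (cross3 (f 0) ν)) :
    c / (4 * Real.pi * d₀ * (c + c₀)) * η ≤ ninf (H (‖x - a 0‖ / c) - H' (‖x - a 0‖ / c)) := by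
  have hc₀ : 0 ≤ c₀ := (norm_nonneg _).trans hspeed
  have hc : 0 < c := hc₀.trans_lt hc₀c
  have hd₀ : 0 < d₀ := hpos.trans_le hdist
  have hamp := le_fieldAmplitude hc₀c hpos hdist ha hspeed
  have hamp₀ : 0 ≤ fieldAmplitude c x a 0 := (by positivity : (0:ℝ) ≤ _).trans hamp
  rw [hH'.1 _ (by gcongr), sub_zero, hH.apply_arrival, ninf_smul, abs_of_nonneg hamp₀]
  exact mul_le_mul hamp hη hη₀ hamp₀

theorem stmt_9_general (c c₀ d₁ d₀ T : ℝ)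
    (hc₀c : c₀ < c)
    (hd₁ : 0 < d₁) (hT : d₀ / c ≤ T)
    (x ν : E3) (f : ℝ → E3) (hf : Continuous f)
    (η : ℝ) (hηdef : η = sInf ((fun t : ℝ => ninf (cross3 (f t) ν)) '' Set.Icc 0 T))
    (hη : 0 < η)
    (a a' : ℝ → E3)
    (ha : Differentiable ℝ a) (ha' : Differentiable ℝ a')
    (hspeed : ∀ t : ℝ, ‖deriv a t‖ ≤ c₀) (hspeed' : ∀ t : ℝ, ‖deriv a' t‖ ≤ c₀)
    (hdist : ∀ t : ℝ, d₁ ≤ ‖x - a t‖ ∧ ‖x - a t‖ ≤ d₀)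
    (hdist' : ∀ t : ℝ, d₁ ≤ ‖x - a' t‖ ∧ ‖x - a' t‖ ≤ d₀)
    (Hν Hν' : ℝ → E3)
    (hH : tangentialField c x a f ν Hν) (hH' : tangentialField c x a' f ν Hν') :
    |‖x - a 0‖ / c - ‖x - a' 0‖ / c| ≤
      12 * Real.pi * d₀ * (c + c₀) * T / (c * η) *
        sSup ((fun s : ℝ => ninf (Hν s - Hν' s)) '' Set.Icc 0 T) := by
  wlog hle : ‖x - a 0‖ ≤ ‖x - a' 0‖ generalizing a a' Hν Hν'
  · simpa only [abs_sub_comm, ninf_sub_comm] using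
      this a' a ha' ha hspeed' hspeed hdist' hdist Hν' Hν hH' hH (le_of_not_ge hle)
  have hc₀ : 0 ≤ c₀ := (norm_nonneg _).trans (hspeed 0)
  have hc : 0 < c := hc₀.trans_lt hc₀c
  have hd₀ : 0 < d₀ := hd₁.trans_le ((hdist 0).1.trans (hdist 0).2)
  have harrival : ∀ b : ℝ → E3, ‖x - b 0‖ ≤ d₀ → ‖x - b 0‖ / c ∈ Icc 0 T := fun b hb =>
    ⟨by positivity, (div_le_div_of_nonneg_right hb hc.le).trans hT⟩
  have hτ := harrival a (hdist 0).2
  have hτ' := harrival a' (hdist' 0).2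
  have hT₀ : 0 ≤ T := hτ.1.trans hτ.2
  have hS₀ : 0 ≤ sSup ((fun s : ℝ => ninf (Hν s - Hν' s)) '' Set.Icc 0 T) :=
    Real.sSup_nonneg (by rintro _ ⟨s, -, rfl⟩; exact ninf_nonneg _)
  rcases hle.eq_or_lt with heq | hlt
  · rw [heq, sub_self, abs_zero]
    positivity
  have hηf : η ≤ ninf (cross3 (f 0) ν) := hηdef ▸ csInf_le
    ⟨0, by rintro _ ⟨t, -, rfl⟩; exact ninf_nonneg _⟩ ⟨0, ⟨le_rfl, hT₀⟩, rfl⟩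
  have hjump := hH.le_ninf_sub_at_arrival hH' hc₀c (ha 0) (hspeed 0)
    (hd₁.trans_le (hdist 0).1) (hdist 0).2 hlt hη.le hηf
  calc |‖x - a 0‖ / c - ‖x - a' 0‖ / c| ≤ T :=
        abs_sub_le_of_nonneg_of_le hτ.1 hτ.2 hτ'.1 hτ'.2
    _ ≤ 3 * T := by linarith
    _ = 12 * Real.pi * d₀ * (c + c₀) * T / (c * η) * (c / (4 * Real.pi * d₀ * (c + c₀)) * η) := by
        field_simp
        ring
    _ ≤ _ := by
        gcongr
        exact le_csSup_of_le (bddAbove_ninf_sub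
          (hH.bddAbove_ninf hc₀c hd₁ hf ha hspeed (fun t => (hdist t).1) T)
          (hH'.bddAbove_ninf hc₀c hd₁ hf ha' hspeed' (fun t => (hdist' t).1) T))
          ⟨_, hτ, rfl⟩ hjump

/-- **Stability of the signal arrival time.** With arrival times
`T(x) = ‖x - a 0‖/c` and `T̃(x) = ‖x - a' 0‖/c`, one has
`|T(x) − T̃(x)| ≤ C₀ · sup_{s∈[0,T]} ‖Hν s − Hν' s‖_∞` where
`C₀ = 12π d₀ (c + c₀) T / (c η)` and `η = inf_{t∈[0,T]} ‖f t ×₃ ν‖_∞ > 0`. -/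
theorem stmt_9 (c c₀ d₁ d₀ T : ℝ)
    (hc₀ : 0 < c₀) (hc₀c : c₀ < c)
    (hd₁ : 0 < d₁) (hd₁d₀ : d₁ ≤ d₀) (hT : d₀ / c ≤ T)
    (x ν : E3) (f : ℝ → E3) (hf : Continuous f)
    (η : ℝ) (hηdef : η = sInf ((fun t : ℝ => ninf (cross3 (f t) ν)) '' Set.Icc 0 T))
    (hη : 0 < η)
    (a a' : ℝ → E3)
    (ha : Differentiable ℝ a) (ha' : Differentiable ℝ a')
    (hspeed : ∀ t : ℝ, ‖deriv a t‖ ≤ c₀) (hspeed' : ∀ t : ℝ, ‖deriv a' t‖ ≤ c₀)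
    (hdist : ∀ t : ℝ, d₁ ≤ ‖x - a t‖ ∧ ‖x - a t‖ ≤ d₀)
    (hdist' : ∀ t : ℝ, d₁ ≤ ‖x - a' t‖ ∧ ‖x - a' t‖ ≤ d₀)
    (Hν Hν' : ℝ → E3)
    (hH : tangentialField c x a f ν Hν) (hH' : tangentialField c x a' f ν Hν') :
    |‖x - a 0‖ / c - ‖x - a' 0‖ / c| ≤
      12 * Real.pi * d₀ * (c + c₀) * T / (c * η) *
        sSup ((fun s : ℝ => ninf (Hν s - Hν' s)) '' Set.Icc 0 T) :=
  stmt_9_general c c₀ d₁ d₀ T hc₀c hd₁ hT x ν f hf η hηdef hη a a' ha ha' hspeed hspeed' hdist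
    hdist' Hν Hν' hH hH'
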